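/- Let Ω ⊆ ℂ be open, let α : Ω → ℂ be holomorphic, let û : Ω → ℝ be smooth with e^{2û(w)} > |α(w)|² for all w ∈ Ω, and let u : Ω → ℝ be the smooth function determined by 2e^u = e^û + |α|² e^{−û}. Set B := e^{2u} − |α|², so that B = ((e^û − |α|² e^{−û})/2)² > 0 on Ω. Then the equation u_{zz̄} e^u B − (1/4)|α_z|² e^u − |u_z|² e^u |α|² + (1/2)α_z u_z̄ e^u ᾱ + (1/2)(ᾱ)_z̄ u_z e^u α + 2B² = 0 holds on Ω if and only if û satisfies the elliptic sinh–Gordon equation û_{zz̄} + e^û − |α|² e^{−û} = 0 on Ω. -/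

import Mathlib

/-!
Put `E = e^û`, `N = e^{-û}` and `W = (E - |α|² N)/2`. Differentiating `2e^u = E + αᾱN` in `z`,
in `z̄`, and its `z`-derivative once more in `z̄` (using `α_z̄ = 0` and `(ᾱ)_z̄ = conj α_z`)
expresses `e^u u_z`, `e^u u_z̄` and `e^u (u_z u_z̄ + u_{zz̄})` through `û`, `α` and `α_z`.
Substituting these, the left side of the Gauss equation becomes `W³ (û_{zz̄} + E - |α|² N)`,
and `W > 0` because `e^{2û} > |α|²`.
-/

open Complex ComplexConjugate

/-- Wirtinger derivative `g_z = (∂ₓg - i ∂_y g)/2`. -/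
noncomputable def wderivZ (g : ℂ → ℂ) (w : ℂ) : ℂ :=
  (fderiv ℝ g w 1 - Complex.I * fderiv ℝ g w Complex.I) / 2

/-- Wirtinger derivative `g_z̄ = (∂ₓg + i ∂_y g)/2`. -/
noncomputable def wderivZbar (g : ℂ → ℂ) (w : ℂ) : ℂ :=
  (fderiv ℝ g w 1 + Complex.I * fderiv ℝ g w Complex.I) / 2

section WirtingerCalculus

variable {f g : ℂ → ℂ} {w : ℂ}

theorem Filter.EventuallyEq.wderivZ_eq (h : f =ᶠ[nhds w] g) : wderivZ f w = wderivZ g w := by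
  rw [wderivZ, wderivZ, h.fderiv_eq]

theorem Filter.EventuallyEq.wderivZbar_eq (h : f =ᶠ[nhds w] g) :
    wderivZbar f w = wderivZbar g w := by
  rw [wderivZbar, wderivZbar, h.fderiv_eq]

theorem wderivZ_const (c : ℂ) : wderivZ (fun _ => c) w = 0 := by
  simp [wderivZ]

theorem wderivZbar_const (c : ℂ) : wderivZbar (fun _ => c) w = 0 := by
  simp [wderivZbar]

theorem wderivZ_add (hf : DifferentiableAt ℝ f w) (hg : DifferentiableAt ℝ g w) :
    wderivZ (fun z => f z + g z) w = wderivZ f w + wderivZ g w := by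
  simp only [wderivZ, fderiv_fun_add hf hg]; simp; ring

theorem wderivZbar_add (hf : DifferentiableAt ℝ f w) (hg : DifferentiableAt ℝ g w) :
    wderivZbar (fun z => f z + g z) w = wderivZbar f w + wderivZbar g w := by
  simp only [wderivZbar, fderiv_fun_add hf hg]; simp; ring

theorem wderivZbar_sub (hf : DifferentiableAt ℝ f w) (hg : DifferentiableAt ℝ g w) :
    wderivZbar (fun z => f z - g z) w = wderivZbar f w - wderivZbar g w := by
  simp only [wderivZbar, fderiv_fun_sub hf hg]; simp; ring

theorem wderivZ_neg : wderivZ (fun z => -f z) w = -wderivZ f w := by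
  simp only [wderivZ, fderiv_fun_neg]; simp; ring

theorem wderivZbar_neg : wderivZbar (fun z => -f z) w = -wderivZbar f w := by
  simp only [wderivZbar, fderiv_fun_neg]; simp; ring

theorem wderivZ_mul (hf : DifferentiableAt ℝ f w) (hg : DifferentiableAt ℝ g w) :
    wderivZ (fun z => f z * g z) w = wderivZ f w * g w + f w * wderivZ g w := by
  simp only [wderivZ, fderiv_fun_mul hf hg]; simp; ring

theorem wderivZbar_mul (hf : DifferentiableAt ℝ f w) (hg : DifferentiableAt ℝ g w) :
    wderivZbar (fun z => f z * g z) w = wderivZbar f w * g w + f w * wderivZbar g w := by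
  simp only [wderivZbar, fderiv_fun_mul hf hg]; simp; ring

theorem wderivZ_cexp (hf : DifferentiableAt ℝ f w) :
    wderivZ (fun z => cexp (f z)) w = cexp (f w) * wderivZ f w := by
  simp only [wderivZ, hf.hasFDerivAt.cexp.fderiv]; simp; ring

theorem wderivZbar_cexp (hf : DifferentiableAt ℝ f w) :
    wderivZbar (fun z => cexp (f z)) w = cexp (f w) * wderivZbar f w := by
  simp only [wderivZbar, hf.hasFDerivAt.cexp.fderiv]; simp; ring

theorem wderivZ_conj (hf : DifferentiableAt ℝ f w) :
    wderivZ (fun z => conj (f z)) w = conj (wderivZbar f w) := by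
  have h : HasFDerivAt (fun z => conj (f z)) ((conjCLE : ℂ →L[ℝ] ℂ).comp (fderiv ℝ f w)) w :=
    conjCLE.hasFDerivAt.comp w hf.hasFDerivAt
  simp [wderivZ, wderivZbar, h.fderiv, map_ofNat]; ring

theorem wderivZbar_conj (hf : DifferentiableAt ℝ f w) :
    wderivZbar (fun z => conj (f z)) w = conj (wderivZ f w) := by
  have h : HasFDerivAt (fun z => conj (f z)) ((conjCLE : ℂ →L[ℝ] ℂ).comp (fderiv ℝ f w)) w :=
    conjCLE.hasFDerivAt.comp w hf.hasFDerivAt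
  simp [wderivZ, wderivZbar, h.fderiv, map_ofNat]

theorem wderivZbar_ofReal {u : ℂ → ℝ} (hu : DifferentiableAt ℝ (fun z => (u z : ℂ)) w) :
    wderivZbar (fun z => (u z : ℂ)) w = conj (wderivZ (fun z => (u z : ℂ)) w) := by
  simpa using wderivZbar_conj hu

theorem DifferentiableAt.wderivZ_eq_deriv (hf : DifferentiableAt ℂ f w) :
    wderivZ f w = deriv f w := by
  simp only [wderivZ, (hf.hasDerivAt.hasFDerivAt.restrictScalars ℝ).fderiv,
    ContinuousLinearMap.coe_restrictScalars', ContinuousLinearMap.toSpanSingleton_apply,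
    smul_eq_mul]
  linear_combination (-deriv f w / 2) * I_mul_I

theorem DifferentiableAt.wderivZbar_eq_zero (hf : DifferentiableAt ℂ f w) : wderivZbar f w = 0 := by
  simp only [wderivZbar, (hf.hasDerivAt.hasFDerivAt.restrictScalars ℝ).fderiv,
    ContinuousLinearMap.coe_restrictScalars', ContinuousLinearMap.toSpanSingleton_apply,
    smul_eq_mul]
  linear_combination (deriv f w / 2) * I_mul_I

theorem ContDiffOn.wderivZ {s : Set ℂ} (hf : ContDiffOn ℝ (⊤ : ℕ∞) f s) (hs : IsOpen s) :
    ContDiffOn ℝ (⊤ : ℕ∞) (wderivZ f) s := by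
  have hf' := hf.fderiv_of_isOpen hs (m := (⊤ : ℕ∞)) (by exact_mod_cast le_top)
  unfold _root_.wderivZ
  fun_prop

end WirtingerCalculus

section DerivativesOfRelation

variable {U V α : ℂ → ℂ} {w : ℂ}

theorem two_cexp_mul_wderivZ_eq (hU : DifferentiableAt ℝ U w) (hV : DifferentiableAt ℝ V w)
    (hα : DifferentiableAt ℂ α w)
    (h : (fun z => 2 * cexp (V z)) =ᶠ[nhds w]
      fun z => cexp (U z) + α z * conj (α z) * cexp (-U z)) :
    2 * cexp (V w) * wderivZ V w
      = wderivZ U w * (cexp (U w) - α w * conj (α w) * cexp (-U w))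
        + deriv α w * conj (α w) * cexp (-U w) := by
  have hαR : DifferentiableAt ℝ α w := hα.restrictScalars ℝ
  have hαc : DifferentiableAt ℝ (fun z => conj (α z)) w := hαR.star
  have h' := h.wderivZ_eq
  simp (disch := fun_prop) only [wderivZ_mul, wderivZ_add, wderivZ_cexp, wderivZ_const,
    wderivZ_neg, wderivZ_conj, hα.wderivZ_eq_deriv, hα.wderivZbar_eq_zero, map_zero] at h'
  linear_combination h'

theorem two_cexp_mul_wderivZbar_eq (hU : DifferentiableAt ℝ U w) (hV : DifferentiableAt ℝ V w)
    (hα : DifferentiableAt ℂ α w)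
    (h : (fun z => 2 * cexp (V z)) =ᶠ[nhds w]
      fun z => cexp (U z) + α z * conj (α z) * cexp (-U z)) :
    2 * cexp (V w) * wderivZbar V w
      = wderivZbar U w * (cexp (U w) - α w * conj (α w) * cexp (-U w))
        + α w * conj (deriv α w) * cexp (-U w) := by
  have hαR : DifferentiableAt ℝ α w := hα.restrictScalars ℝ
  have hαc : DifferentiableAt ℝ (fun z => conj (α z)) w := hαR.star
  have h' := h.wderivZbar_eq
  simp (disch := fun_prop) only [wderivZbar_mul, wderivZbar_add, wderivZbar_cexp,
    wderivZbar_const, wderivZbar_neg, wderivZbar_conj, hα.wderivZ_eq_deriv,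
    hα.wderivZbar_eq_zero] at h'
  linear_combination h'

theorem two_cexp_mul_wderivZbar_wderivZ_eq (hU : DifferentiableAt ℝ U w)
    (hV : DifferentiableAt ℝ V w) (hUz : DifferentiableAt ℝ (wderivZ U) w)
    (hVz : DifferentiableAt ℝ (wderivZ V) w) (hα : DifferentiableAt ℂ α w)
    (hα' : DifferentiableAt ℂ (deriv α) w)
    (h : (fun z => 2 * cexp (V z) * wderivZ V z) =ᶠ[nhds w]
      fun z => wderivZ U z * (cexp (U z) - α z * conj (α z) * cexp (-U z))
        + deriv α z * conj (α z) * cexp (-U z)) :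
    2 * cexp (V w) * (wderivZbar V w * wderivZ V w + wderivZbar (wderivZ V) w)
      = wderivZbar (wderivZ U) w * (cexp (U w) - α w * conj (α w) * cexp (-U w))
        + wderivZ U w * wderivZbar U w * (cexp (U w) + α w * conj (α w) * cexp (-U w))
        + (deriv α w * conj (deriv α w) - deriv α w * conj (α w) * wderivZbar U w
          - α w * conj (deriv α w) * wderivZ U w) * cexp (-U w) := by
  have hαR : DifferentiableAt ℝ α w := hα.restrictScalars ℝ
  have hαc : DifferentiableAt ℝ (fun z => conj (α z)) w := hαR.star
  have hα'R : DifferentiableAt ℝ (deriv α) w := hα'.restrictScalars ℝ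
  have h' := h.wderivZbar_eq
  simp (disch := fun_prop) only [wderivZbar_mul, wderivZbar_add, wderivZbar_sub,
    wderivZbar_cexp, wderivZbar_const, wderivZbar_neg, wderivZbar_conj, hα.wderivZ_eq_deriv,
    hα.wderivZbar_eq_zero, hα'.wderivZbar_eq_zero] at h'
  linear_combination h'

end DerivativesOfRelation

theorem gauss_eq_cube_mul_sinhGordon_of_relations {K : Type*} [Field K] [CharZero K]
    {E N a b d e s t m v P Q M : K} (hEN : E * N = 1)
    (hv : 2 * v = E + a * b * N)
    (hP : 2 * v * P = s * (E - a * b * N) + d * b * N)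
    (hQ : 2 * v * Q = t * (E - a * b * N) + a * e * N)
    (hM : 2 * v * (Q * P + M) = m * (E - a * b * N) + s * t * (E + a * b * N)
      + (d * e - d * b * t - a * e * s) * N) :
    M * v * (v ^ 2 - a * b) - 1 / 4 * (d * e) * v - P * Q * v * (a * b) + 1 / 2 * d * Q * v * b
        + 1 / 2 * e * P * v * a + 2 * (v ^ 2 - a * b) ^ 2
      = ((E - a * b * N) / 2) ^ 3 * (m + E - a * b * N) := by
  -- eliminate `M`, then `P` and `Q`; what is left is a rational identity in `E`
  linear_combination (norm := skip) (v ^ 2 - a * b) / 2 * hM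
    - v / 4 * (2 * v * Q) * hP - v / 4 * (s * (E - a * b * N) + d * b * N) * hQ
    + d * b / 4 * hQ + e * a / 4 * hP
  obtain rfl : N = E⁻¹ := eq_inv_of_mul_eq_one_right hEN
  obtain rfl : v = (E + a * b * E⁻¹) / 2 := by linear_combination hv / 2
  have hE : E ≠ 0 := left_ne_zero_of_mul_eq_one hEN
  field_simp
  ring

theorem gauss_identity_of_eqOn {Ω : Set ℂ} (hΩ : IsOpen Ω) {U V α : ℂ → ℂ}
    (hα : DifferentiableOn ℂ α Ω) (hU : ContDiffOn ℝ (⊤ : ℕ∞) U Ω)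
    (hV : ContDiffOn ℝ (⊤ : ℕ∞) V Ω)
    (hrel : Set.EqOn (fun z => 2 * cexp (V z))
      (fun z => cexp (U z) + α z * conj (α z) * cexp (-U z)) Ω)
    {w : ℂ} (hw : w ∈ Ω) :
    wderivZbar (wderivZ V) w * cexp (V w) * (cexp (V w) ^ 2 - α w * conj (α w))
        - 1 / 4 * (deriv α w * conj (deriv α w)) * cexp (V w)
        - wderivZ V w * wderivZbar V w * cexp (V w) * (α w * conj (α w))
        + 1 / 2 * deriv α w * wderivZbar V w * cexp (V w) * conj (α w)
        + 1 / 2 * conj (deriv α w) * wderivZ V w * cexp (V w) * α w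
        + 2 * (cexp (V w) ^ 2 - α w * conj (α w)) ^ 2
      = ((cexp (U w) - α w * conj (α w) * cexp (-U w)) / 2) ^ 3
        * (wderivZbar (wderivZ U) w + cexp (U w) - α w * conj (α w) * cexp (-U w)) := by
  have hUd z (hz : z ∈ Ω) : DifferentiableAt ℝ U z :=
    (hU.contDiffAt (hΩ.mem_nhds hz)).differentiableAt (by simp)
  have hVd z (hz : z ∈ Ω) : DifferentiableAt ℝ V z :=
    (hV.contDiffAt (hΩ.mem_nhds hz)).differentiableAt (by simp)
  have hαd z (hz : z ∈ Ω) : DifferentiableAt ℂ α z := hα.differentiableAt (hΩ.mem_nhds hz)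
  have hZ : Set.EqOn (fun z => 2 * cexp (V z) * wderivZ V z)
      (fun z => wderivZ U z * (cexp (U z) - α z * conj (α z) * cexp (-U z))
        + deriv α z * conj (α z) * cexp (-U z)) Ω := fun z hz =>
    two_cexp_mul_wderivZ_eq (hUd z hz) (hVd z hz) (hαd z hz)
      (Filter.eventuallyEq_of_mem (hΩ.mem_nhds hz) hrel)
  have hZbar := two_cexp_mul_wderivZbar_eq (hUd w hw) (hVd w hw) (hαd w hw)
    (Filter.eventuallyEq_of_mem (hΩ.mem_nhds hw) hrel)
  have hZbarZ := two_cexp_mul_wderivZbar_wderivZ_eq (hUd w hw) (hVd w hw)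
    (((hU.wderivZ hΩ).contDiffAt (hΩ.mem_nhds hw)).differentiableAt (by simp))
    (((hV.wderivZ hΩ).contDiffAt (hΩ.mem_nhds hw)).differentiableAt (by simp))
    (hαd w hw) ((hα.deriv hΩ).differentiableAt (hΩ.mem_nhds hw))
    (Filter.eventuallyEq_of_mem (hΩ.mem_nhds hw) hZ)
  have hEN : cexp (U w) * cexp (-U w) = 1 := by rw [← Complex.exp_add, add_neg_cancel, exp_zero]
  exact gauss_eq_cube_mul_sinhGordon_of_relations hEN (hrel hw) (hZ hw) hZbar hZbarZ

noncomputable def gaussExpr (α : ℂ → ℂ) (u : ℂ → ℝ) (w : ℂ) : ℂ :=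
  wderivZbar (fun z => wderivZ (fun z' => (u z' : ℂ)) z) w * (Real.exp (u w) : ℂ)
      * ((Real.exp (2 * u w) - ‖α w‖ ^ 2 : ℝ) : ℂ)
    - (1 / 4 : ℂ) * (‖wderivZ α w‖ : ℂ) ^ 2 * (Real.exp (u w) : ℂ)
    - (‖wderivZ (fun z => (u z : ℂ)) w‖ : ℂ) ^ 2 * (Real.exp (u w) : ℂ)
      * (‖α w‖ : ℂ) ^ 2
    + (1 / 2 : ℂ) * wderivZ α w * wderivZbar (fun z => (u z : ℂ)) w
      * (Real.exp (u w) : ℂ) * conj (α w)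
    + (1 / 2 : ℂ) * wderivZbar (fun z => conj (α z)) w * wderivZ (fun z => (u z : ℂ)) w
      * (Real.exp (u w) : ℂ) * α w
    + 2 * ((Real.exp (2 * u w) - ‖α w‖ ^ 2 : ℝ) : ℂ) ^ 2

noncomputable def sinhGordonExpr (α : ℂ → ℂ) (uh : ℂ → ℝ) (w : ℂ) : ℂ :=
  wderivZbar (fun z => wderivZ (fun z' => (uh z' : ℂ)) z) w
    + (Real.exp (uh w) : ℂ)
    - (‖α w‖ : ℂ) ^ 2 * (Real.exp (-uh w) : ℂ)

theorem gaussExpr_eq_cube_mul_sinhGordonExpr {Ω : Set ℂ} (hΩ : IsOpen Ω) {α : ℂ → ℂ}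
    (hα : DifferentiableOn ℂ α Ω) {uh u : ℂ → ℝ}
    (huh : ContDiffOn ℝ (⊤ : ℕ∞) uh Ω) (hu : ContDiffOn ℝ (⊤ : ℕ∞) u Ω)
    (hudef : ∀ w ∈ Ω,
      2 * Real.exp (u w) = Real.exp (uh w) + ‖α w‖ ^ 2 * Real.exp (-uh w))
    {w : ℂ} (hw : w ∈ Ω) :
    gaussExpr α u w
      = (((Real.exp (uh w) - ‖α w‖ ^ 2 * Real.exp (-uh w)) / 2 : ℝ) : ℂ) ^ 3
        * sinhGordonExpr α uh w := by
  have hU : ContDiffOn ℝ (⊤ : ℕ∞) (fun z => (uh z : ℂ)) Ω :=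
    ofRealCLM.contDiff.comp_contDiffOn huh
  have hV : ContDiffOn ℝ (⊤ : ℕ∞) (fun z => (u z : ℂ)) Ω := ofRealCLM.contDiff.comp_contDiffOn hu
  have hrel : Set.EqOn (fun z => 2 * cexp (u z))
      (fun z => cexp (uh z) + α z * conj (α z) * cexp (-uh z)) Ω := fun z hz => by
    have h := congrArg ((↑) : ℝ → ℂ) (hudef z hz)
    push_cast at h
    rwa [← mul_conj'] at h
  have key := gauss_identity_of_eqOn hΩ hα hU hV hrel hw
  have hVd : DifferentiableAt ℝ (fun z => (u z : ℂ)) w :=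
    (hV.contDiffAt (hΩ.mem_nhds hw)).differentiableAt (by simp)
  have hexp2 : cexp (2 * (u w : ℂ)) = cexp (u w) ^ 2 := by rw [sq, ← Complex.exp_add, two_mul]
  simp only [gaussExpr, sinhGordonExpr]
  push_cast
  rw [wderivZbar_ofReal hVd] at key ⊢
  rw [wderivZbar_conj ((hα.differentiableAt (hΩ.mem_nhds hw)).restrictScalars ℝ),
    (hα.differentiableAt (hΩ.mem_nhds hw)).wderivZ_eq_deriv, ← mul_conj', ← mul_conj',
    ← mul_conj', hexp2]
  linear_combination key

theorem Real.exp_sub_mul_exp_neg_pos {x c : ℝ} (h : c < Real.exp (2 * x)) :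
    0 < Real.exp x - c * Real.exp (-x) := by
  have hfac : Real.exp x - c * Real.exp (-x) = Real.exp (-x) * (Real.exp (2 * x) - c) := by
    rw [mul_sub, ← Real.exp_add]; ring_nf
  rw [hfac]
  exact mul_pos (Real.exp_pos _) (sub_pos.mpr h)

theorem stmt4 (Ω : Set ℂ) (hΩ : IsOpen Ω)
    (α : ℂ → ℂ) (hα : DifferentiableOn ℂ α Ω)
    (uh u : ℂ → ℝ)
    (huh : ContDiffOn ℝ (⊤ : ℕ∞) uh Ω)
    (hu : ContDiffOn ℝ (⊤ : ℕ∞) u Ω)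
    (hineq : ∀ w ∈ Ω, ‖α w‖ ^ 2 < Real.exp (2 * uh w))
    (hudef : ∀ w ∈ Ω,
      2 * Real.exp (u w) = Real.exp (uh w) + ‖α w‖ ^ 2 * Real.exp (-uh w)) :
    -- `B := e^{2u} − |α|²`
    (∀ w ∈ Ω,
        wderivZbar (fun z => wderivZ (fun z' => (u z' : ℂ)) z) w * (Real.exp (u w) : ℂ)
            * ((Real.exp (2 * u w) - ‖α w‖ ^ 2 : ℝ) : ℂ)
          - (1 / 4 : ℂ) * (‖wderivZ α w‖ : ℂ) ^ 2 * (Real.exp (u w) : ℂ)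
          - (‖wderivZ (fun z => (u z : ℂ)) w‖ : ℂ) ^ 2 * (Real.exp (u w) : ℂ)
            * (‖α w‖ : ℂ) ^ 2
          + (1 / 2 : ℂ) * wderivZ α w * wderivZbar (fun z => (u z : ℂ)) w
            * (Real.exp (u w) : ℂ) * conj (α w)
          + (1 / 2 : ℂ) * wderivZbar (fun z => conj (α z)) w * wderivZ (fun z => (u z : ℂ)) w
            * (Real.exp (u w) : ℂ) * α w
          + 2 * ((Real.exp (2 * u w) - ‖α w‖ ^ 2 : ℝ) : ℂ) ^ 2 = 0)
    ↔
    (∀ w ∈ Ω,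
        wderivZbar (fun z => wderivZ (fun z' => (uh z' : ℂ)) z) w
          + (Real.exp (uh w) : ℂ)
          - (‖α w‖ : ℂ) ^ 2 * (Real.exp (-uh w) : ℂ) = 0) := by
  change (∀ w ∈ Ω, gaussExpr α u w = 0) ↔ ∀ w ∈ Ω, sinhGordonExpr α uh w = 0
  refine forall₂_congr fun w hw => ?_
  have hfactor : (((Real.exp (uh w) - ‖α w‖ ^ 2 * Real.exp (-uh w)) / 2 : ℝ) : ℂ) ≠ 0 :=
    ofReal_ne_zero.mpr (half_pos (Real.exp_sub_mul_exp_neg_pos (hineq w hw))).ne'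
  rw [gaussExpr_eq_cube_mul_sinhGordonExpr hΩ hα huh hu hudef hw, mul_eq_zero,
    or_iff_right (pow_ne_zero 3 hfactor)]
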